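/- arXiv:math/0006013 — 4 statements merged into one kernel-verified Lean document; each statement's English description precedes it below -/
import Mathlib

section
/- Let L : ℝⁿ × ℝⁿ → [0,∞) be lower semicontinuous and such that L(x,·) is convex and finite-valued for every x. Then for every x ∈ ℝⁿ, every R > 0 and every ε > 0 there exists δ > 0 such that for all ξ with |ξ - x| ≤ δ and all u with |u| ≤ R one has L(ξ,u) ≥ L(x,u) − ε. -/
open Filter Topology

/-- Near `(x, y)`, lower semicontinuity keeps `F` above `F x y - ε / 2` while continuity of
`F x` keeps `F x` below `F x y + ε / 2`; the tube lemma makes this uniform over compact `K`. -/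
theorem LowerSemicontinuous.eventually_forall_sub_lt_of_continuous {X Y : Type*}
    [TopologicalSpace X] [TopologicalSpace Y] {F : X → Y → ℝ}
    (hF : LowerSemicontinuous (Function.uncurry F)) {x : X} (hx : Continuous (F x))
    {K : Set Y} (hK : IsCompact K) {ε : ℝ} (hε : 0 < ε) :
    ∀ᶠ ξ in 𝓝 x, ∀ u ∈ K, F x u - ε < F ξ u := by
  refine hK.eventually_forall_of_forall_eventually fun y _ => ?_
  have hbelow : ∀ᶠ z : X × Y in 𝓝 (x, y), F x y - ε / 2 < F z.1 z.2 :=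
    hF (x, y) _ (sub_lt_self _ (half_pos hε))
  have habove : ∀ᶠ z : X × Y in 𝓝 (x, y), F x z.2 < F x y + ε / 2 :=
    ((hx.tendsto y).comp (continuous_snd.tendsto (x, y))).eventually
      (gt_mem_nhds (lt_add_of_pos_right _ (half_pos hε)))
  filter_upwards [hbelow, habove] with z h₁ h₂
  linarith

theorem stmt_2_general {n : ℕ} (L : EuclideanSpace ℝ (Fin n) → EuclideanSpace ℝ (Fin n) → ℝ)
    (hlsc : LowerSemicontinuous
      (fun p : EuclideanSpace ℝ (Fin n) × EuclideanSpace ℝ (Fin n) => L p.1 p.2))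
    (hconv : ∀ x, ConvexOn ℝ Set.univ (L x)) :
    ∀ (x : EuclideanSpace ℝ (Fin n)) (R ε : ℝ), 0 < R → 0 < ε →
      ∃ δ > 0, ∀ (ξ u : EuclideanSpace ℝ (Fin n)),
        ‖ξ - x‖ ≤ δ → ‖u‖ ≤ R → L x u - ε ≤ L ξ u := by
  intro x R ε _ hε
  have hcont : Continuous (L x) :=
    continuousOn_univ.mp ((hconv x).continuousOn isOpen_univ)
  obtain ⟨δ, hδ, hball⟩ := Metric.nhds_basis_closedBall.eventually_iff.mp
    (hlsc.eventually_forall_sub_lt_of_continuous hcont (isCompact_closedBall 0 R) hε)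
  refine ⟨δ, hδ, fun ξ u hξ hu => (hball ?_ u ?_).le⟩
  · rwa [Metric.mem_closedBall, dist_eq_norm]
  · rwa [mem_closedBall_zero_iff]

theorem stmt_2 {n : ℕ} (L : EuclideanSpace ℝ (Fin n) → EuclideanSpace ℝ (Fin n) → ℝ)
    (hL0 : ∀ x u, 0 ≤ L x u)
    (hlsc : LowerSemicontinuous
      (fun p : EuclideanSpace ℝ (Fin n) × EuclideanSpace ℝ (Fin n) => L p.1 p.2))
    (hconv : ∀ x, ConvexOn ℝ Set.univ (L x)) :
    ∀ (x : EuclideanSpace ℝ (Fin n)) (R ε : ℝ), 0 < R → 0 < ε →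
      ∃ δ > 0, ∀ (ξ u : EuclideanSpace ℝ (Fin n)),
        ‖ξ - x‖ ≤ δ → ‖u‖ ≤ R → L x u - ε ≤ L ξ u :=
  stmt_2_general L hlsc hconv
end

section
/- Let V be the value function of the Bolza problem. For every (t,x) ∈ dom(V) and every u ∈ ℝⁿ, the upper contingent derivative satisfies D↓V(t,x)(1,−u) ≤ L(x,u), provided L is continuous. Here D↓V(t,x)(w) = limsup_{h→0+, v→w} (V((t,x)+hv) − V(t,x))/h. -/
open MeasureTheory Set Filter
open scoped ENNReal Topology

def Superlinear {n : ℕ} (Θ : EuclideanSpace ℝ (Fin n) → ℝ) : Prop :=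
  ∀ M : ℝ, ∃ R : ℝ, ∀ u : EuclideanSpace ℝ (Fin n), R ≤ ‖u‖ → M * ‖u‖ ≤ Θ u

noncomputable def bolzaValue {n : ℕ}
    (L : EuclideanSpace ℝ (Fin n) → EuclideanSpace ℝ (Fin n) → ℝ)
    (φ : EuclideanSpace ℝ (Fin n) → ℝ≥0∞)
    (t : ℝ) (x : EuclideanSpace ℝ (Fin n)) : ℝ≥0∞ :=
  ⨅ (y : ℝ → EuclideanSpace ℝ (Fin n)) (y' : ℝ → EuclideanSpace ℝ (Fin n))
    (_ : IntervalIntegrable y' volume 0 t)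
    (_ : ∀ s ∈ Set.Icc (0:ℝ) t, y s = x + ∫ τ in (0:ℝ)..s, y' τ)
    (_ : IntervalIntegrable (fun s => L (y s) (y' s)) volume 0 t),
    ENNReal.ofReal (∫ s in (0:ℝ)..t, L (y s) (y' s)) + φ (y t)

/-- Upper contingent derivative `D↓W(p)(w) = limsup_{h→0+, v→w} (W(p+hv) - W(p))/h`. -/
noncomputable def upperContingentDeriv {α : Type*} [AddCommGroup α] [Module ℝ α]
    [TopologicalSpace α] (W : α → EReal) (p : α) (w : α) : EReal :=
  limsup (fun q : ℝ × α => ((q.1⁻¹ : ℝ) : EReal) * (W (p + q.1 • q.2) - W p))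
    ((𝓝[>] (0:ℝ)) ×ˢ 𝓝 w)

/-!
Concatenating the straight segment from `x + a • w` to `x` (velocity `-w`, duration `a`) with an
arbitrary admissible arc for `V(t, x)` gives the dynamic-programming comparison
`V(t + a, x + a • w) ≤ ∫₀ᵃ L(x + (a - s) • w, -w) ds + V(t, x)`.
For `(a, a • w) = h • (k, m)` with `h → 0⁺` and `(k, m) → (1, -u)`, continuity of `L` bounds the
integrand by `c / k` for any `c > L x u`, so the difference quotient is eventually at most `c`.
-/

section PiecewiseIntegral

variable {E : Type*} {f g : ℝ → E} {a b c : ℝ}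

theorem eqOn_ite_le_left (hab : a ≤ b) :
    EqOn (fun s => if s ≤ b then f s else g s) f (uIoo a b) := fun s hs => by
  simp [(uIoo_of_le hab ▸ hs).2.le]

theorem eqOn_ite_le_right (hbc : b ≤ c) :
    EqOn (fun s => if s ≤ b then f s else g s) g (uIoo b c) := fun s hs => by
  simp [not_le.2 (uIoo_of_le hbc ▸ hs).1]

theorem IntervalIntegrable.ite_le [NormedAddCommGroup E] (hab : a ≤ b) (hbc : b ≤ c)
    (hf : IntervalIntegrable f volume a b) (hg : IntervalIntegrable g volume b c) :
    IntervalIntegrable (fun s => if s ≤ b then f s else g s) volume a c :=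
  (hf.congr_uIoo (eqOn_ite_le_left hab).symm).trans (hg.congr_uIoo (eqOn_ite_le_right hbc).symm)

theorem intervalIntegral.integral_ite_le [NormedAddCommGroup E] [NormedSpace ℝ E]
    (hab : a ≤ b) (hbc : b ≤ c)
    (hf : IntervalIntegrable f volume a b) (hg : IntervalIntegrable g volume b c) :
    ∫ s in a..c, (if s ≤ b then f s else g s) = (∫ s in a..b, f s) + ∫ s in b..c, g s := by
  rw [← intervalIntegral.integral_add_adjacent_intervals
      (hf.congr_uIoo (eqOn_ite_le_left hab).symm) (hg.congr_uIoo (eqOn_ite_le_right hbc).symm),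
    intervalIntegral.integral_congr_uIoo (eqOn_ite_le_left hab),
    intervalIntegral.integral_congr_uIoo (eqOn_ite_le_right hbc)]

end PiecewiseIntegral

theorem upperContingentDeriv_le_of_eventually_le {α : Type*} [AddCommGroup α] [Module ℝ α]
    [TopologicalSpace α] {W : α → EReal} {p w : α} {c : ℝ} (hp : W p ≠ ⊤)
    (h : ∀ c' > c, ∀ᶠ q in 𝓝[>] (0 : ℝ) ×ˢ 𝓝 w, W (p + q.1 • q.2) ≤ W p + (q.1 * c' : ℝ)) :
    upperContingentDeriv W p w ≤ c := by
  refine EReal.le_of_forall_lt_iff_le.1 fun c' hc' => ?_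
  refine limsup_le_of_le (by isBoundedDefault) ?_
  filter_upwards [h c' (EReal.coe_lt_coe_iff.1 hc'), (eventually_mem_nhdsWithin).prod_inl _]
    with q hq (hq0 : 0 < q.1)
  have hdiff : W (p + q.1 • q.2) - W p ≤ (q.1 * c' : ℝ) :=
    (EReal.sub_le_iff_le_add (.inr (EReal.coe_ne_top _)) (.inl hp)).2 (add_comm (W p) _ ▸ hq)
  calc ((q.1⁻¹ : ℝ) : EReal) * (W (p + q.1 • q.2) - W p)
      ≤ ((q.1⁻¹ : ℝ) : EReal) * (q.1 * c' : ℝ) :=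
        mul_le_mul_of_nonneg_left hdiff (EReal.coe_nonneg.2 (inv_nonneg.2 hq0.le))
    _ = c' := by rw [← EReal.coe_mul, inv_mul_cancel_left₀ hq0.ne']

section Bolza

variable {n : ℕ} {L : EuclideanSpace ℝ (Fin n) → EuclideanSpace ℝ (Fin n) → ℝ}
  {φ : EuclideanSpace ℝ (Fin n) → ℝ≥0∞}

theorem bolzaValue_add_le {t a : ℝ} (ht : 0 ≤ t) (ha : 0 ≤ a) {z : EuclideanSpace ℝ (Fin n)}
    {η η' : ℝ → EuclideanSpace ℝ (Fin n)} (hη' : IntervalIntegrable η' volume 0 a)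
    (hη : ∀ s ∈ Icc (0 : ℝ) a, η s = z + ∫ τ in (0 : ℝ)..s, η' τ)
    (hcost : IntervalIntegrable (fun s => L (η s) (η' s)) volume 0 a) :
    bolzaValue L φ (t + a) z
      ≤ ENNReal.ofReal (∫ s in (0 : ℝ)..a, L (η s) (η' s)) + bolzaValue L φ t (η a) := by
  simp only [bolzaValue, ENNReal.add_iInf]
  refine le_iInf fun y => le_iInf fun y' => le_iInf fun hy' => le_iInf fun hy =>
    le_iInf fun hycost => ?_
  have hta : a ≤ t + a := le_add_of_nonneg_left ht
  set Y : ℝ → EuclideanSpace ℝ (Fin n) := fun s => if s ≤ a then η s else y (s - a)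
  set Y' : ℝ → EuclideanSpace ℝ (Fin n) := fun s => if s ≤ a then η' s else y' (s - a)
  have hy'a : IntervalIntegrable (fun s => y' (s - a)) volume a (t + a) := by
    simpa using hy'.comp_sub_right a
  have hycosta : IntervalIntegrable (fun s => L (y (s - a)) (y' (s - a))) volume a (t + a) := by
    simpa using hycost.comp_sub_right a
  have hYcost : (fun s => L (Y s) (Y' s))
      = fun s => if s ≤ a then L (η s) (η' s) else L (y (s - a)) (y' (s - a)) := by
    funext s; simp only [Y, Y']; split_ifs <;> rfl
  have hY : ∀ s ∈ Icc (0 : ℝ) (t + a), Y s = z + ∫ τ in (0 : ℝ)..s, Y' τ := by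
    intro s ⟨hs0, hs⟩
    rcases le_or_gt s a with hsa | hsa
    · rw [intervalIntegral.integral_congr fun τ hτ => if_pos ((uIcc_of_le hs0 ▸ hτ).2.trans hsa)]
      simp only [Y, if_pos hsa, hη s ⟨hs0, hsa⟩]
    · rw [intervalIntegral.integral_ite_le ha hsa.le hη'
          (hy'a.mono_set (uIcc_subset_uIcc left_mem_uIcc (mem_uIcc_of_le hsa.le hs))),
        intervalIntegral.integral_comp_sub_right (fun s => y' s), sub_self, ← add_assoc,
        ← hη a ⟨ha, le_rfl⟩]
      simp only [Y, if_neg (not_le.2 hsa)]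
      exact hy (s - a) ⟨by linarith, by linarith⟩
  have hYend : Y (t + a) = y t := by
    rcases ht.eq_or_lt with rfl | ht'
    · simp [Y, hy 0 ⟨le_rfl, le_rfl⟩, hη a ⟨ha, le_rfl⟩]
    · simp [Y, ht']
  refine iInf_le_of_le Y <| iInf_le_of_le Y' <| iInf_le_of_le (hη'.ite_le ha hta hy'a) <|
    iInf_le_of_le hY <| iInf_le_of_le (hYcost ▸ hcost.ite_le ha hta hycosta) ?_
  rw [hYcost, intervalIntegral.integral_ite_le ha hta hcost hycosta,
    intervalIntegral.integral_comp_sub_right (fun s => L (y s) (y' s)), sub_self,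
    add_sub_cancel_right, hYend, ← add_assoc]
  exact add_le_add_left ENNReal.ofReal_add_le _

theorem bolzaValue_add_smul_le
    (hLcont : Continuous fun p : EuclideanSpace ℝ (Fin n) × EuclideanSpace ℝ (Fin n) => L p.1 p.2)
    {t a : ℝ} (ht : 0 ≤ t) (ha : 0 ≤ a) (x w : EuclideanSpace ℝ (Fin n)) {r : ℝ}
    (hr : ∀ s ∈ Icc (0 : ℝ) a, L (x + s • w) (-w) ≤ r) :
    bolzaValue L φ (t + a) (x + a • w) ≤ ENNReal.ofReal (a * r) + bolzaValue L φ t x := by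
  have hcost : Continuous fun s : ℝ => L (x + (a - s) • w) (-w) :=
    hLcont.comp (f := fun s : ℝ => (x + (a - s) • w, -w)) (by fun_prop)
  have hη (s : ℝ) (_ : s ∈ Icc (0 : ℝ) a) :
      x + (a - s) • w = x + a • w + ∫ _ in (0 : ℝ)..s, -w := by
    simp only [intervalIntegral.integral_const, sub_zero, sub_smul, smul_neg]
    abel
  have hbound : ∫ s in (0 : ℝ)..a, L (x + (a - s) • w) (-w) ≤ a * r := by
    simpa using intervalIntegral.integral_mono_on ha (hcost.intervalIntegrable (μ := volume) 0 a)
      intervalIntegrable_const fun s hs => hr (a - s) ⟨sub_nonneg.2 hs.2, sub_le_self a hs.1⟩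
  calc bolzaValue L φ (t + a) (x + a • w)
      ≤ ENNReal.ofReal (∫ s in (0 : ℝ)..a, L (x + (a - s) • w) (-w))
          + bolzaValue L φ t (x + (a - a) • w) :=
        bolzaValue_add_le ht ha intervalIntegrable_const hη (hcost.intervalIntegrable 0 a)
    _ ≤ ENNReal.ofReal (a * r) + bolzaValue L φ t x := by
        rw [sub_self, zero_smul, add_zero]
        gcongr

theorem eventually_le_div_on_segment
    (hLcont : Continuous fun p : EuclideanSpace ℝ (Fin n) × EuclideanSpace ℝ (Fin n) => L p.1 p.2)
    {x u : EuclideanSpace ℝ (Fin n)} {c : ℝ} (hc : L x u < c) :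
    ∀ᶠ q : ℝ × ℝ × EuclideanSpace ℝ (Fin n) in 𝓝[>] 0 ×ˢ 𝓝 (1, -u),
      0 < q.1 ∧ 0 < q.2.1 ∧ ∀ s ∈ Icc (0 : ℝ) (q.1 * q.2.1),
        L (x + s • (q.2.1⁻¹ • q.2.2)) (-(q.2.1⁻¹ • q.2.2)) ≤ c / q.2.1 := by
  -- Rescaling `s = θ * (h * k)` puts the segment parameter in the fixed compact set `[0, 1]`.
  have hnear : ∀ᶠ q : ℝ × ℝ × EuclideanSpace ℝ (Fin n) in 𝓝 (0, 1, -u), 0 < q.2.1 ∧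
      ∀ θ ∈ Icc (0 : ℝ) 1, q.2.1 * L (x + (θ * q.1) • q.2.2) (-(q.2.1⁻¹ • q.2.2)) < c := by
    refine (continuousAt_const.eventually_lt continuousAt_snd.fst one_pos).and
      (isCompact_Icc.eventually_forall_of_forall_eventually fun θ _ => ?_)
    refine ContinuousAt.eventually_lt ?_ continuousAt_const (by simpa using hc)
    exact continuousAt_fst.snd.fst.mul (hLcont.continuousAt.comp
      (f := fun z : (ℝ × ℝ × EuclideanSpace ℝ (Fin n)) × ℝ =>
        (x + (z.2 * z.1.1) • z.1.2.2, -(z.1.2.1⁻¹ • z.1.2.2))) (by fun_prop (disch := norm_num)))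
  filter_upwards [(eventually_mem_nhdsWithin).prod_inl _,
    hnear.filter_mono ((Filter.prod_mono_left _ nhdsWithin_le_nhds).trans nhds_prod_eq.ge)]
    with ⟨h, k, m⟩ (hh : 0 < h) ⟨(hk : 0 < k), hθ⟩
  have hhk : 0 < h * k := mul_pos hh hk
  refine ⟨hh, hk, fun s ⟨hs0, hs⟩ => ?_⟩
  have hθs := hθ (s / (h * k)) ⟨div_nonneg hs0 hhk.le, div_le_one_of_le₀ hs hhk.le⟩
  rw [smul_smul, ← show s / (h * k) * h = s * k⁻¹ by field_simp, le_div_iff₀ hk]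
  linarith

end Bolza

theorem stmt_9_general {n : ℕ}
    (L : EuclideanSpace ℝ (Fin n) → EuclideanSpace ℝ (Fin n) → ℝ)
    (hL0 : ∀ x u, 0 ≤ L x u)
    (hLcont : Continuous
      (fun p : EuclideanSpace ℝ (Fin n) × EuclideanSpace ℝ (Fin n) => L p.1 p.2))
    (φ : EuclideanSpace ℝ (Fin n) → ℝ≥0∞)
    (t : ℝ) (ht : 0 ≤ t) (x : EuclideanSpace ℝ (Fin n))
    (hdom : bolzaValue L φ t x ≠ ⊤) (u : EuclideanSpace ℝ (Fin n)) :
    upperContingentDeriv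
        (fun p : ℝ × EuclideanSpace ℝ (Fin n) => ((bolzaValue L φ p.1 p.2 : ℝ≥0∞) : EReal))
        (t, x) (1, -u)
      ≤ ((L x u : ℝ) : EReal) := by
  refine upperContingentDeriv_le_of_eventually_le (EReal.coe_ennreal_eq_top_iff.not.2 hdom)
    fun c hc => ?_
  filter_upwards [eventually_le_div_on_segment hLcont hc] with ⟨h, k, m⟩ ⟨hh, hk, hseg⟩
  have hV := bolzaValue_add_smul_le (φ := φ) hLcont ht (mul_pos hh hk).le x (k⁻¹ • m) hseg
  rw [show h * k * (c / k) = h * c by field_simp] at hV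
  have hpt : ((t, x) : ℝ × EuclideanSpace ℝ (Fin n)) + h • (k, m)
      = (t + h * k, x + (h * k) • (k⁻¹ • m)) := by
    simp [smul_smul, hk.ne']
  have hc0 : 0 ≤ h * c := mul_nonneg hh.le ((hL0 x u).trans hc.le)
  rw [hpt, ← max_eq_left hc0, ← EReal.coe_ennreal_ofReal, ← EReal.coe_ennreal_add,
    EReal.coe_ennreal_le_coe_ennreal_iff]
  exact hV.trans_eq (add_comm _ _)

theorem stmt_9 {n : ℕ}
    (L : EuclideanSpace ℝ (Fin n) → EuclideanSpace ℝ (Fin n) → ℝ)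
    (hL0 : ∀ x u, 0 ≤ L x u)
    (hLcont : Continuous
      (fun p : EuclideanSpace ℝ (Fin n) × EuclideanSpace ℝ (Fin n) => L p.1 p.2))
    (hLconv : ∀ x, ConvexOn ℝ Set.univ (L x))
    (Θ : EuclideanSpace ℝ (Fin n) → ℝ) (hΘ0 : ∀ u, 0 ≤ Θ u)
    (hΘconv : ConvexOn ℝ Set.univ Θ) (hΘsuper : Superlinear Θ)
    (hcoerc : ∀ x u, Θ u ≤ L x u)
    (φ : EuclideanSpace ℝ (Fin n) → ℝ≥0∞)
    (hφlsc : LowerSemicontinuous φ) (hφ : ∃ x, φ x ≠ ⊤)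
    (t : ℝ) (ht : 0 ≤ t) (x : EuclideanSpace ℝ (Fin n))
    (hdom : bolzaValue L φ t x ≠ ⊤) (u : EuclideanSpace ℝ (Fin n)) :
    upperContingentDeriv
        (fun p : ℝ × EuclideanSpace ℝ (Fin n) => ((bolzaValue L φ p.1 p.2 : ℝ≥0∞) : EReal))
        (t, x) (1, -u)
      ≤ ((L x u : ℝ) : EReal) :=
  stmt_9_general L hL0 hLcont φ t ht x hdom u
end

section
/- Assume L : ℝⁿ×ℝⁿ → [0,∞) is lower semicontinuous, convex in u, coercive, and locally bounded. Then L⁺(x,u) ≥ L(x,u) for all (x,u), where L⁺(x,u) = limsup_{h→0+} (1/h) inf{ ∫_{−h}^{0} L(y(s), y'(s)) ds : y(−h) = x − hu, y(0) = x }. -/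
open MeasureTheory Set Filter
open scoped ENNReal Topology

def LocallyBounded {n : ℕ}
    (L : EuclideanSpace ℝ (Fin n) → EuclideanSpace ℝ (Fin n) → ℝ) : Prop :=
  ∀ x₀ : EuclideanSpace ℝ (Fin n), ∃ M r : ℝ, 0 < r ∧
    ∀ x u, ‖x - x₀‖ ≤ r → ‖u‖ ≤ r → L x u ≤ M

/-- Infimum of `∫_{-h}^0 L(y,y')` over absolutely continuous arcs `y` on `[-h,0]`
with `y(-h) = x - h•u` and `y(0) = x`. -/
noncomputable def arcInf {n : ℕ}
    (L : EuclideanSpace ℝ (Fin n) → EuclideanSpace ℝ (Fin n) → ℝ)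
    (x u : EuclideanSpace ℝ (Fin n)) (h : ℝ) : ℝ≥0∞ :=
  ⨅ (y : ℝ → EuclideanSpace ℝ (Fin n)) (y' : ℝ → EuclideanSpace ℝ (Fin n))
    (_ : IntervalIntegrable y' volume (-h) 0)
    (_ : ∀ s ∈ Set.Icc (-h) (0:ℝ), y s = (x - h • u) + ∫ τ in (-h)..s, y' τ)
    (_ : y 0 = x)
    (_ : IntervalIntegrable (fun s => L (y s) (y' s)) volume (-h) 0),
    ENNReal.ofReal (∫ s in (-h)..(0:ℝ), L (y s) (y' s))

/-- `L⁺(x,u) = limsup_{h→0+} (1/h) inf{∫_{-h}^0 L(y,y') : y(-h)=x-hu, y(0)=x}`. -/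
noncomputable def LPlus {n : ℕ}
    (L : EuclideanSpace ℝ (Fin n) → EuclideanSpace ℝ (Fin n) → ℝ)
    (x u : EuclideanSpace ℝ (Fin n)) : ℝ≥0∞ :=
  limsup (fun h : ℝ => arcInf L x u h / ENNReal.ofReal h) (𝓝[>] (0:ℝ))

/-! Below `L x u` lies a continuous affine minorant `l + b` of the convex lower semicontinuous
function `L x`. Lower semicontinuity of `L` on compact sets of velocities, together with the
superlinear lower bound `Θ` for large velocities, keeps `l + b - ε` below `L x'` for all `x'` near
`x`. An arc from `x - h • u` to `x` whose cost is below `c * h` has length `O(h)` by coercivity,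
so for small `h` it stays in that neighbourhood; integrating the minorant along it and using
`∫ y' = h • u` gives cost at least `h * (l u + b - ε)`, which is at least `c * h`. -/

theorem ConvexOn.exists_continuousLinearMap_add_le_of_lt {E : Type*} [TopologicalSpace E]
    [AddCommGroup E] [Module ℝ E] [IsTopologicalAddGroup E] [ContinuousSMul ℝ E]
    [LocallyConvexSpace ℝ E] {f : E → ℝ} (hf : ConvexOn ℝ univ f) (hf_lsc : LowerSemicontinuous f)
    {x : E} {a : ℝ} (hax : a < f x) :
    ∃ (l : E →L[ℝ] ℝ) (b : ℝ), (∀ v, l v + b ≤ f v) ∧ l x + b = a := by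
  obtain ⟨l, b, hle, heq⟩ := hf.exists_affine_le_of_lt (𝕜 := ℝ) (mem_univ x) hax isClosed_univ
    (hf_lsc.lowerSemicontinuousOn univ)
  exact ⟨l, b, fun v => by simpa using hle ⟨v, mem_univ v⟩, by simpa using heq⟩

theorem LowerSemicontinuous.eventually_forall_lt_of_isCompact {X Y : Type*} [TopologicalSpace X]
    [TopologicalSpace Y] {F : X × Y → ℝ} (hF : LowerSemicontinuous F) {K : Set Y}
    (hK : IsCompact K) {x : X} {c : ℝ} (hc : ∀ y ∈ K, c < F (x, y)) :
    ∀ᶠ x' in 𝓝 x, ∀ y ∈ K, c < F (x', y) :=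
  hK.eventually_forall_of_forall_eventually fun y hy => hF (x, y) c (hc y hy)

section Superlinear

variable {n : ℕ} {Θ : EuclideanSpace ℝ (Fin n) → ℝ}

theorem Superlinear.exists_add_le (hΘ : Superlinear Θ) (l : EuclideanSpace ℝ (Fin n) →L[ℝ] ℝ)
    (b : ℝ) : ∃ R, ∀ v, R ≤ ‖v‖ → l v + b ≤ Θ v := by
  obtain ⟨R, hR⟩ := hΘ (‖l‖ + 1)
  refine ⟨max R b, fun v hv => ?_⟩
  have hlv : l v ≤ ‖l‖ * ‖v‖ := (le_abs_self _).trans (l.le_opNorm v)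
  linarith [hR v ((le_max_left _ _).trans hv), le_max_right R b]

theorem Superlinear.exists_norm_le_add (hΘ : Superlinear Θ) (hΘ0 : ∀ v, 0 ≤ Θ v) :
    ∃ C, ∀ v, ‖v‖ ≤ C + Θ v := by
  obtain ⟨R, hR⟩ := hΘ 1
  refine ⟨max R 0, fun v => ?_⟩
  rcases le_or_gt (max R 0) ‖v‖ with hv | hv
  · linarith [hR v ((le_max_left R 0).trans hv), le_max_right R 0]
  · linarith [hΘ0 v]

end Superlinear

theorem eventually_forall_add_le_of_affine_le {n : ℕ}
    {L : EuclideanSpace ℝ (Fin n) → EuclideanSpace ℝ (Fin n) → ℝ}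
    (hL_lsc : LowerSemicontinuous
      (fun p : EuclideanSpace ℝ (Fin n) × EuclideanSpace ℝ (Fin n) => L p.1 p.2))
    {Θ : EuclideanSpace ℝ (Fin n) → ℝ} (hΘ : Superlinear Θ) (hΘL : ∀ x u, Θ u ≤ L x u)
    {x : EuclideanSpace ℝ (Fin n)} {l : EuclideanSpace ℝ (Fin n) →L[ℝ] ℝ} {b b' : ℝ}
    (hlb : ∀ v, l v + b ≤ L x v) (hb' : b' < b) :
    ∀ᶠ x' in 𝓝 x, ∀ v, l v + b' ≤ L x' v := by
  obtain ⟨R, hR⟩ := hΘ.exists_add_le l b'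
  have hF : LowerSemicontinuous
      (fun p : EuclideanSpace ℝ (Fin n) × EuclideanSpace ℝ (Fin n) => L p.1 p.2 - l p.2) :=
    hL_lsc.add (by fun_prop : Continuous fun p : _ × _ => -l p.2).lowerSemicontinuous
  have hball := hF.eventually_forall_lt_of_isCompact (isCompact_closedBall 0 R) (c := b')
    fun v _ => by linarith [hlb v]
  filter_upwards [hball] with x' hx' v
  rcases le_or_gt ‖v‖ R with hv | hv
  · linarith [hx' v (mem_closedBall_zero_iff.2 hv)]
  · linarith [hR v hv.le, hΘL x' v]

section Arcs

variable {E : Type*} [NormedAddCommGroup E] [NormedSpace ℝ E]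

theorem norm_sub_le_integral_norm_of_eq_add_integral {y y' : ℝ → E} {p : E} {a b s : ℝ}
    (hy' : IntervalIntegrable y' volume a b) (hy : ∀ t ∈ Icc a b, y t = p + ∫ τ in a..t, y' τ)
    (hs : s ∈ Icc a b) : ‖y s - y b‖ ≤ ∫ τ in a..b, ‖y' τ‖ := by
  have hab : a ≤ b := hs.1.trans hs.2
  have hys : IntervalIntegrable y' volume a s :=
    hy'.mono_set (by rw [uIcc_of_le hs.1, uIcc_of_le hab]; exact Icc_subset_Icc_right hs.2)
  have hsub : y s - y b = -∫ τ in s..b, y' τ := by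
    rw [hy s hs, hy b ⟨hab, le_rfl⟩, ← intervalIntegral.integral_interval_sub_left hy' hys]
    abel
  rw [hsub, norm_neg]
  calc ‖∫ τ in s..b, y' τ‖ ≤ ∫ τ in s..b, ‖y' τ‖ :=
        intervalIntegral.norm_integral_le_integral_norm hs.2
    _ ≤ ∫ τ in a..b, ‖y' τ‖ :=
        intervalIntegral.integral_mono_interval hs.1 hs.2 le_rfl
          (Eventually.of_forall fun _ => norm_nonneg _) hy'.norm

theorem mul_le_integral_of_forall_near_affine_le [CompleteSpace E] {L : E → E → ℝ} {x u : E}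
    {l : E →L[ℝ] ℝ} {b c C δ h : ℝ} (hmin : ∀ x' v, ‖x' - x‖ < δ → l v + b ≤ L x' v)
    (hgrowth : ∀ x' v, ‖v‖ ≤ C + L x' v) (hc : c ≤ l u + b) (hh : 0 < h) (hhδ : h * (C + c) ≤ δ)
    {y y' : ℝ → E} (hy' : IntervalIntegrable y' volume (-h) 0)
    (hy : ∀ s ∈ Icc (-h) (0 : ℝ), y s = (x - h • u) + ∫ τ in (-h)..s, y' τ) (hy0 : y 0 = x)
    (hL : IntervalIntegrable (fun s => L (y s) (y' s)) volume (-h) 0) :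
    c * h ≤ ∫ s in (-h)..(0 : ℝ), L (y s) (y' s) := by
  by_contra! hlt
  have hh0 : -h ≤ (0 : ℝ) := by linarith
  have hdisp : ∫ τ in (-h)..(0 : ℝ), y' τ = h • u := by
    have := hy 0 ⟨hh0, le_rfl⟩
    rw [hy0] at this
    exact add_left_cancel (a := x - h • u) (by rw [← this, sub_add_cancel])
  have hlength : ∫ τ in (-h)..(0 : ℝ), ‖y' τ‖ < δ :=
    calc ∫ τ in (-h)..(0 : ℝ), ‖y' τ‖ ≤ ∫ τ in (-h)..(0 : ℝ), (C + L (y τ) (y' τ)) :=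
          intervalIntegral.integral_mono_on hh0 hy'.norm (intervalIntegrable_const.add hL)
            fun τ _ => hgrowth _ _
      _ = h * C + ∫ τ in (-h)..(0 : ℝ), L (y τ) (y' τ) := by
          simp only [intervalIntegral.integral_add intervalIntegrable_const hL,
            intervalIntegral.integral_const, sub_neg_eq_add, zero_add, smul_eq_mul]
      _ < δ := by nlinarith
  have hnear : ∀ s ∈ Icc (-h) (0 : ℝ), ‖y s - x‖ < δ := fun s hs =>
    hy0 ▸ (norm_sub_le_integral_norm_of_eq_add_integral hy' hy hs).trans_lt hlength
  have hl : IntervalIntegrable (fun s => l (y' s)) volume (-h) 0 :=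
    ⟨l.integrable_comp hy'.1, l.integrable_comp hy'.2⟩
  have hlower : ∫ s in (-h)..(0 : ℝ), (l (y' s) + b) ≤ ∫ s in (-h)..(0 : ℝ), L (y s) (y' s) :=
    intervalIntegral.integral_mono_on hh0 (hl.add intervalIntegrable_const) hL
      fun s hs => hmin _ _ (hnear s hs)
  rw [intervalIntegral.integral_add hl intervalIntegrable_const, l.intervalIntegral_comp_comm hy',
    hdisp] at hlower
  simp only [map_smul, smul_eq_mul, intervalIntegral.integral_const, sub_neg_eq_add, zero_add]
    at hlower
  nlinarith

end Arcs

section LPlus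

variable {n : ℕ} {L : EuclideanSpace ℝ (Fin n) → EuclideanSpace ℝ (Fin n) → ℝ}
  {x u : EuclideanSpace ℝ (Fin n)}

theorem ofReal_mul_le_arcInf {l : EuclideanSpace ℝ (Fin n) →L[ℝ] ℝ} {b c C δ h : ℝ}
    (hmin : ∀ x' v, ‖x' - x‖ < δ → l v + b ≤ L x' v) (hgrowth : ∀ x' v, ‖v‖ ≤ C + L x' v)
    (hc : c ≤ l u + b) (hh : 0 < h) (hhδ : h * (C + c) ≤ δ) :
    ENNReal.ofReal (c * h) ≤ arcInf L x u h :=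
  le_iInf fun _ => le_iInf fun _ => le_iInf fun hy' => le_iInf fun hy => le_iInf fun hy0 =>
    le_iInf fun hL => ENNReal.ofReal_le_ofReal <|
      mul_le_integral_of_forall_near_affine_le hmin hgrowth hc hh hhδ hy' hy hy0 hL

theorem ofReal_le_LPlus
    (hL_lsc : LowerSemicontinuous
      (fun p : EuclideanSpace ℝ (Fin n) × EuclideanSpace ℝ (Fin n) => L p.1 p.2))
    (hL_conv : ∀ x, ConvexOn ℝ univ (L x)) {Θ : EuclideanSpace ℝ (Fin n) → ℝ}
    (hΘ : Superlinear Θ) (hΘ0 : ∀ u, 0 ≤ Θ u) (hΘL : ∀ x u, Θ u ≤ L x u) {c : ℝ} (hc0 : 0 ≤ c)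
    (hc : c < L x u) : ENNReal.ofReal c ≤ LPlus L x u := by
  obtain ⟨c', hcc', hc'⟩ := exists_between hc
  obtain ⟨l, b, hlb, hlu⟩ := (hL_conv x).exists_continuousLinearMap_add_le_of_lt
    (hL_lsc.comp (Continuous.prodMk_right x)) hc'
  obtain ⟨δ, hδ, hmin⟩ := Metric.eventually_nhds_iff.1 <|
    eventually_forall_add_le_of_affine_le hL_lsc hΘ hΘL hlb (sub_lt_self b (sub_pos.2 hcc'))
  obtain ⟨C, hC⟩ := hΘ.exists_norm_le_add hΘ0
  have hlim : Tendsto (fun h : ℝ => h * (C + c)) (𝓝[>] 0) (𝓝 0) :=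
    ((continuous_mul_const (C + c)).tendsto' 0 0 (zero_mul _)).mono_left nhdsWithin_le_nhds
  refine le_limsup_of_frequently_le' (Eventually.frequently ?_)
  filter_upwards [self_mem_nhdsWithin, hlim.eventually (ge_mem_nhds hδ)] with h hh hhδ
  rw [ENNReal.le_div_iff_mul_le (Or.inl (by simpa using hh)) (Or.inl ENNReal.ofReal_ne_top),
    ← ENNReal.ofReal_mul hc0]
  exact ofReal_mul_le_arcInf (fun x' v hx' => hmin (by rwa [dist_eq_norm]) v)
    (fun x' v => (hC v).trans (by linarith [hΘL x' v])) (by linarith) hh hhδ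

end LPlus

theorem stmt_13_general {n : ℕ}
    (L : EuclideanSpace ℝ (Fin n) → EuclideanSpace ℝ (Fin n) → ℝ)
    (hLlsc : LowerSemicontinuous
      (fun p : EuclideanSpace ℝ (Fin n) × EuclideanSpace ℝ (Fin n) => L p.1 p.2))
    (hLconv : ∀ x, ConvexOn ℝ Set.univ (L x))
    (Θ : EuclideanSpace ℝ (Fin n) → ℝ) (hΘ0 : ∀ u, 0 ≤ Θ u)
    (hΘsuper : Superlinear Θ)
    (hcoerc : ∀ x u, Θ u ≤ L x u) :
    ∀ x u : EuclideanSpace ℝ (Fin n), ENNReal.ofReal (L x u) ≤ LPlus L x u := by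
  intro x u
  refine le_of_forall_lt_imp_le_of_dense fun m hm => ?_
  have hm_top : m ≠ ⊤ := ne_top_of_lt hm
  rw [← ENNReal.ofReal_toReal hm_top]
  exact ofReal_le_LPlus hLlsc hLconv hΘsuper hΘ0 hcoerc ENNReal.toReal_nonneg
    ((ENNReal.lt_ofReal_iff_toReal_lt hm_top).1 hm)

theorem stmt_13 {n : ℕ}
    (L : EuclideanSpace ℝ (Fin n) → EuclideanSpace ℝ (Fin n) → ℝ)
    (hL0 : ∀ x u, 0 ≤ L x u)
    (hLlsc : LowerSemicontinuous
      (fun p : EuclideanSpace ℝ (Fin n) × EuclideanSpace ℝ (Fin n) => L p.1 p.2))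
    (hLconv : ∀ x, ConvexOn ℝ Set.univ (L x))
    (Θ : EuclideanSpace ℝ (Fin n) → ℝ) (hΘ0 : ∀ u, 0 ≤ Θ u)
    (hΘconv : ConvexOn ℝ Set.univ Θ) (hΘsuper : Superlinear Θ)
    (hcoerc : ∀ x u, Θ u ≤ L x u)
    (hLbd : LocallyBounded L) :
    ∀ x u : EuclideanSpace ℝ (Fin n), ENNReal.ofReal (L x u) ≤ LPlus L x u :=
  stmt_13_general L hLlsc hLconv Θ hΘ0 hΘsuper hcoerc
end

section
/- Let V be the value function of the Bolza problem with continuous L. Then V is a viscosity supersolution of V_t + H(x,−V_x) = 0 on (0,∞)×ℝⁿ: for every (t,x) with t > 0 and every (p_t,p_x) ∈ ∂₋V(t,x), one has p_t + H(x,−p_x) ≥ 0, where H(x,p) = sup_{u∈ℝⁿ} (⟨p,u⟩ − L(x,u)). -/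
open MeasureTheory Set Filter
open scoped ENNReal

open scoped RealInnerProductSpace

/-- The Hamiltonian `H(x,p) = sup_u (⟨p,u⟩ - L(x,u))`. -/
noncomputable def hamiltonian {n : ℕ}
    (L : EuclideanSpace ℝ (Fin n) → EuclideanSpace ℝ (Fin n) → ℝ)
    (x p : EuclideanSpace ℝ (Fin n)) : ℝ :=
  sSup {r : ℝ | ∃ u : EuclideanSpace ℝ (Fin n), r = ⟪p, u⟫ - L x u}

/-- The subdifferential `∂₋W(t,x)` of a function `W : ℝ × ℝⁿ → EReal`. -/
def subdifferentialP {n : ℕ}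
    (W : ℝ × EuclideanSpace ℝ (Fin n) → EReal) (p : ℝ × EuclideanSpace ℝ (Fin n)) :
    Set (ℝ × EuclideanSpace ℝ (Fin n)) :=
  {q | (0 : EReal) ≤ Filter.liminf (fun z : ℝ × EuclideanSpace ℝ (Fin n) =>
      ((‖z - p‖⁻¹ : ℝ) : EReal) *
        (W z - W p - ((q.1 * (z.1 - p.1) + ⟪q.2, z.2 - p.2⟫ : ℝ) : EReal)))
    (nhdsWithin p {p}ᶜ)}

/-!
Follow an `h²`-optimal arc `y` from `x` for a short time `h`. Dynamic programming bounds
`V(t - h, y h)` above by `V(t, x) + h² - ∫₀ʰ L(y, y')`, while the subdifferential inequality with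
margin `σ` bounds it below by `V(t, x) - pₜ h + ⟪pₓ, y h - x⟫ - σ ‖(h, y h - x)‖`. Fenchel's
inequality `⟪-pₓ, y'⟫ ≤ (1 - σ) (L(y, y') + H(y, -pₓ / (1 - σ)))` lets the running cost absorb the
`σ`-error, which superlinearity bounds by `σ (h + R₁ h + ∫₀ʰ L(y, y'))`. Dividing by `h` and letting
`h → 0`, then `σ → 0`, gives the inequality. Both limits use that `H` is continuous: superlinearity
confines the supremum defining `H` to a ball, uniformly near each point, and superlinearity also
keeps near-optimal arcs close to `x` for short times.
-/

open Topology

theorem uIcc_subset_uIcc_of_le {c a b d : ℝ} (hca : c ≤ a) (hab : a ≤ b) (hbd : b ≤ d) :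
    uIcc a b ⊆ uIcc c d :=
  uIcc_subset_uIcc (mem_uIcc_of_le hca (hab.trans hbd)) (mem_uIcc_of_le (hca.trans hab) hbd)

section

variable {n : ℕ}

local notation "ℝⁿ" => EuclideanSpace ℝ (Fin n)

theorem Superlinear.exists_norm_le_add_mul {Θ : ℝⁿ → ℝ} (hΘ : Superlinear Θ) {ε : ℝ}
    (hε : 0 < ε) : ∃ R, 0 ≤ R ∧ ∀ u a, 0 ≤ a → Θ u ≤ a → ‖u‖ ≤ R + ε * a := by
  obtain ⟨R, hR⟩ := hΘ ε⁻¹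
  refine ⟨max R 0, le_max_right _ _, fun u a ha hΘa => ?_⟩
  rcases le_or_gt ‖u‖ (max R 0) with hu | hu
  · nlinarith
  · have hua : ‖u‖ ≤ ε * a :=
      (inv_mul_le_iff₀ hε).1 ((hR u ((le_max_left _ _).trans hu.le)).trans hΘa)
    linarith [le_max_right R 0]

theorem bddAbove_range_of_forall_exists_le {α : Type*} [TopologicalSpace α] {f : α → ℝ}
    {K : Set α} (hK : IsCompact K) (hf : ContinuousOn f K) (hdom : ∀ u, ∃ v ∈ K, f u ≤ f v) :
    BddAbove (range f) := by
  obtain ⟨B, hB⟩ := (hK.image_of_continuousOn hf).bddAbove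
  refine ⟨B, ?_⟩
  rintro _ ⟨u, rfl⟩
  obtain ⟨v, hvK, huv⟩ := hdom u
  exact huv.trans (hB (mem_image_of_mem f hvK))

theorem sSup_range_eq_sSup_image_of_forall_exists_le {α : Type*} [TopologicalSpace α]
    {f : α → ℝ} {K : Set α} (hK : IsCompact K) (hK₀ : K.Nonempty) (hf : ContinuousOn f K)
    (hdom : ∀ u, ∃ v ∈ K, f u ≤ f v) :
    sSup (range f) = sSup (f '' K) := by
  have hKbdd : BddAbove (f '' K) := (hK.image_of_continuousOn hf).bddAbove
  refine le_antisymm (csSup_le ((hK₀.image f).mono (image_subset_range f K)) ?_)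
    (csSup_le_csSup (bddAbove_range_of_forall_exists_le hK hf hdom) (hK₀.image f)
      (image_subset_range f K))
  rintro _ ⟨u, rfl⟩
  obtain ⟨v, hvK, huv⟩ := hdom u
  exact huv.trans (le_csSup hKbdd (mem_image_of_mem f hvK))

variable {L : EuclideanSpace ℝ (Fin n) → EuclideanSpace ℝ (Fin n) → ℝ}
  {Θ : EuclideanSpace ℝ (Fin n) → ℝ}

theorem exists_forall_exists_mem_closedBall_inner_sub_le
    (hLcont : Continuous fun p : ℝⁿ × ℝⁿ => L p.1 p.2) (hΘ : Superlinear Θ)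
    (hcoerc : ∀ x u, Θ u ≤ L x u) (x₀ p₀ : ℝⁿ) :
    ∃ R, 0 ≤ R ∧ ∀ y ∈ Metric.closedBall x₀ 1, ∀ q ∈ Metric.closedBall p₀ 1, ∀ u,
      ∃ v ∈ Metric.closedBall (0 : ℝⁿ) R, ⟪q, u⟫ - L y u ≤ ⟪q, v⟫ - L y v := by
  obtain ⟨C, hC⟩ := ((isCompact_closedBall x₀ 1).image
    (hLcont.comp (continuous_id.prodMk continuous_const))).bddAbove
  obtain ⟨R, hR⟩ := hΘ (‖p₀‖ + 1 + max C 0 + 1)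
  refine ⟨max R 1, by positivity, fun y hy q hq u => ?_⟩
  rcases le_or_gt ‖u‖ (max R 1) with hu | hu
  · exact ⟨u, mem_closedBall_zero_iff.2 hu, le_rfl⟩
  refine ⟨0, Metric.mem_closedBall_self (by positivity), ?_⟩
  have hLy : L y 0 ≤ max C 0 := (hC (mem_image_of_mem _ hy)).trans (le_max_left _ _)
  have hq' : ‖q‖ ≤ ‖p₀‖ + 1 := by
    have := norm_le_norm_add_norm_sub' q p₀
    rw [mem_closedBall_iff_norm] at hq
    linarith
  have hinner : ⟪q, u⟫ ≤ (‖p₀‖ + 1) * ‖u‖ :=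
    (real_inner_le_norm q u).trans (mul_le_mul_of_nonneg_right hq' (norm_nonneg u))
  have hLu := (hR u ((le_max_left _ _).trans hu.le)).trans (hcoerc y u)
  have hu1 : 1 ≤ ‖u‖ := (le_max_right _ _).trans hu.le
  rw [inner_zero_right]
  nlinarith [le_max_right C 0]

theorem hamiltonian_eq_sSup_range (x p : ℝⁿ) :
    hamiltonian L x p = sSup (range fun u => ⟪p, u⟫ - L x u) := by
  simp only [hamiltonian, range, eq_comm]

theorem continuous_hamiltonian (hLcont : Continuous fun p : ℝⁿ × ℝⁿ => L p.1 p.2)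
    (hΘ : Superlinear Θ) (hcoerc : ∀ x u, Θ u ≤ L x u) :
    Continuous fun z : ℝⁿ × ℝⁿ => hamiltonian L z.1 z.2 := by
  refine continuous_iff_continuousAt.2 fun z₀ => ?_
  obtain ⟨R, hR0, hR⟩ :=
    exists_forall_exists_mem_closedBall_inner_sub_le hLcont hΘ hcoerc z₀.1 z₀.2
  have hg : Continuous fun w : (ℝⁿ × ℝⁿ) × ℝⁿ => ⟪w.1.2, w.2⟫ - L w.1.1 w.2 :=
    (continuous_fst.snd.inner continuous_snd).sub
      (hLcont.comp (continuous_fst.fst.prodMk continuous_snd))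
  refine ((isCompact_closedBall (0 : ℝⁿ) R).continuous_sSup
    (f := fun z u => ⟪z.2, u⟫ - L z.1 u) hg).continuousAt.congr ?_
  filter_upwards [prod_mem_nhds (Metric.closedBall_mem_nhds z₀.1 one_pos)
    (Metric.closedBall_mem_nhds z₀.2 one_pos)] with z hz
  rw [hamiltonian_eq_sSup_range]
  exact (sSup_range_eq_sSup_image_of_forall_exists_le (isCompact_closedBall _ _)
    ⟨0, Metric.mem_closedBall_self hR0⟩ (hg.comp (Continuous.prodMk_right z)).continuousOn
    (hR z.1 hz.1 z.2 hz.2)).symm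

theorem inner_sub_le_hamiltonian (hLcont : Continuous fun p : ℝⁿ × ℝⁿ => L p.1 p.2)
    (hΘ : Superlinear Θ) (hcoerc : ∀ x u, Θ u ≤ L x u) (x p u : ℝⁿ) :
    ⟪p, u⟫ - L x u ≤ hamiltonian L x p := by
  obtain ⟨R, -, hR⟩ := exists_forall_exists_mem_closedBall_inner_sub_le hLcont hΘ hcoerc x p
  rw [hamiltonian_eq_sSup_range]
  refine le_csSup (bddAbove_range_of_forall_exists_le (isCompact_closedBall 0 R) ?_
    (hR x (Metric.mem_closedBall_self zero_le_one) p (Metric.mem_closedBall_self zero_le_one)))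
    ⟨u, rfl⟩
  exact ((continuous_const.inner continuous_id).sub
    (hLcont.comp (continuous_const.prodMk continuous_id))).continuousOn

theorem ne_top_of_mem_subdifferentialP {W : ℝ × ℝⁿ → EReal} {p q : ℝ × ℝⁿ}
    (hq : q ∈ subdifferentialP W p) : W p ≠ ⊤ := by
  intro hWp
  have hbot : ∀ᶠ z in 𝓝[≠] p, ((‖z - p‖⁻¹ : ℝ) : EReal) *
      (W z - W p - ((q.1 * (z.1 - p.1) + ⟪q.2, z.2 - p.2⟫ : ℝ) : EReal)) = ⊥ := by
    filter_upwards [self_mem_nhdsWithin] with z hz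
    rw [hWp, EReal.sub_top, EReal.bot_sub,
      EReal.coe_mul_bot_of_pos (inv_pos.2 (norm_pos_iff.2 (sub_ne_zero.2 hz)))]
  rw [subdifferentialP, mem_ofPred_eq, liminf_congr hbot, liminf_const] at hq
  simp at hq

theorem eventually_le_of_mem_subdifferentialP {V : ℝ × ℝⁿ → ℝ≥0∞} {p q : ℝ × ℝⁿ}
    (hq : q ∈ subdifferentialP (fun z => (V z : EReal)) p) {σ : ℝ} (hσ : 0 < σ) :
    ∀ᶠ z in 𝓝 p, V z ≠ ⊤ →
      (V p).toReal + (q.1 * (z.1 - p.1) + ⟪q.2, z.2 - p.2⟫) - σ * ‖z - p‖ ≤ (V z).toReal := by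
  have hVp : V p ≠ ⊤ := by simpa using ne_top_of_mem_subdifferentialP hq
  have hev := eventually_lt_of_lt_liminf
    (lt_of_lt_of_le (EReal.coe_lt_coe_iff.2 (neg_neg_of_pos hσ)) hq)
  rw [eventually_nhdsWithin_iff] at hev
  filter_upwards [hev] with z hz hVz
  rcases eq_or_ne z p with rfl | hzp
  · simp
  have hD : 0 < ‖z - p‖ := norm_pos_iff.2 (sub_ne_zero.2 hzp)
  have hlt := hz hzp
  rw [← EReal.coe_ennreal_toReal hVz, ← EReal.coe_ennreal_toReal hVp] at hlt
  norm_cast at hlt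
  rw [← div_eq_inv_mul, lt_div_iff₀ hD] at hlt
  linarith

structure IsAdmissibleArc (L : ℝⁿ → ℝⁿ → ℝ) (t : ℝ) (x : ℝⁿ) (y y' : ℝ → ℝⁿ) : Prop where
  intervalIntegrable_deriv : IntervalIntegrable y' volume 0 t
  eq_add_integral : ∀ s ∈ Icc (0 : ℝ) t, y s = x + ∫ τ in (0 : ℝ)..s, y' τ
  intervalIntegrable_cost : IntervalIntegrable (fun s => L (y s) (y' s)) volume 0 t

namespace IsAdmissibleArc

variable {t : ℝ} {x : EuclideanSpace ℝ (Fin n)} {y y' : ℝ → EuclideanSpace ℝ (Fin n)}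

theorem bolzaValue_le (hy : IsAdmissibleArc L t x y y') (φ : ℝⁿ → ℝ≥0∞) :
    bolzaValue L φ t x ≤ ENNReal.ofReal (∫ s in (0 : ℝ)..t, L (y s) (y' s)) + φ (y t) :=
  iInf_le_of_le y <| iInf_le_of_le y' <| iInf_le_of_le hy.1 <| iInf_le_of_le hy.2 <|
    iInf_le _ hy.3

theorem shift (hy : IsAdmissibleArc L t x y y') {h : ℝ} (hh : 0 ≤ h) (hht : h ≤ t) :
    IsAdmissibleArc L (t - h) (y h) (fun s => y (s + h)) (fun s => y' (s + h)) where
  intervalIntegrable_deriv := by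
    simpa using (hy.1.mono_set (uIcc_subset_uIcc_of_le hh hht le_rfl)).comp_add_right h
  eq_add_integral s hs := by
    have hsh : s + h ∈ Icc 0 t := ⟨by linarith [hs.1], by linarith [hs.2]⟩
    rw [hy.2 (s + h) hsh, hy.2 h ⟨hh, hht⟩, add_assoc,
      intervalIntegral.integral_comp_add_right y' h, zero_add,
      intervalIntegral.integral_add_adjacent_intervals
        (hy.1.mono_set (uIcc_subset_uIcc_of_le le_rfl hh hht))
        (hy.1.mono_set (uIcc_subset_uIcc_of_le hh (by linarith [hs.1]) hsh.2))]
  intervalIntegrable_cost := by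
    simpa using (hy.3.mono_set (uIcc_subset_uIcc_of_le hh hht le_rfl)).comp_add_right h

theorem bolzaValue_sub_le (hy : IsAdmissibleArc L t x y y') (φ : ℝⁿ → ℝ≥0∞) {h : ℝ}
    (hh : 0 ≤ h) (hht : h ≤ t) :
    bolzaValue L φ (t - h) (y h) ≤
      ENNReal.ofReal (∫ s in h..t, L (y s) (y' s)) + φ (y t) := by
  have := (hy.shift hh hht).bolzaValue_le φ
  rwa [intervalIntegral.integral_comp_add_right (fun s => L (y s) (y' s)), zero_add,
    sub_add_cancel] at this

theorem norm_sub_le (hy : IsAdmissibleArc L t x y y') {s : ℝ} (hs : s ∈ Icc 0 t) {R ε : ℝ}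
    (hbound : ∀ Y u, ‖u‖ ≤ R + ε * L Y u) :
    ‖y s - x‖ ≤ s * R + ε * ∫ τ in (0 : ℝ)..s, L (y τ) (y' τ) := by
  have hcost := hy.3.mono_set (uIcc_subset_uIcc_of_le le_rfl hs.1 hs.2)
  rw [hy.2 s hs, add_sub_cancel_left]
  calc ‖∫ τ in (0 : ℝ)..s, y' τ‖ ≤ ∫ τ in (0 : ℝ)..s, (R + ε * L (y τ) (y' τ)) :=
        intervalIntegral.norm_integral_le_of_norm_le hs.1 (ae_of_all _ fun τ _ => hbound _ _)
          (intervalIntegrable_const.add (hcost.const_mul ε))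
    _ = s * R + ε * ∫ τ in (0 : ℝ)..s, L (y τ) (y' τ) := by
        rw [intervalIntegral.integral_add intervalIntegrable_const (hcost.const_mul ε),
          intervalIntegral.integral_const, intervalIntegral.integral_const_mul, sub_zero,
          smul_eq_mul]

theorem inner_sub_le (hy : IsAdmissibleArc L t x y y') {h : ℝ} (hh : 0 ≤ h) (hht : h ≤ t)
    {q : ℝⁿ} {K : ℝ} (hK : ∀ s ∈ Icc 0 h, ∀ u, ⟪q, u⟫ - L (y s) u ≤ K) :
    ⟪q, y h - x⟫ ≤ (∫ s in (0 : ℝ)..h, L (y s) (y' s)) + K * h := by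
  have hderiv := hy.1.mono_set (uIcc_subset_uIcc_of_le le_rfl hh hht)
  have hcost := hy.3.mono_set (uIcc_subset_uIcc_of_le le_rfl hh hht)
  rw [hy.2 h ⟨hh, hht⟩, add_sub_cancel_left, ← innerSL_apply_apply ℝ,
    ← (innerSL ℝ q).intervalIntegral_comp_comm hderiv]
  calc ∫ s in (0 : ℝ)..h, innerSL ℝ q (y' s) ≤ ∫ s in (0 : ℝ)..h, (L (y s) (y' s) + K) := by
        refine intervalIntegral.integral_mono_on hh
          ⟨(innerSL ℝ q).integrable_comp hderiv.1, (innerSL ℝ q).integrable_comp hderiv.2⟩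
          (hcost.add intervalIntegrable_const) fun s hs => ?_
        rw [innerSL_apply_apply]
        linarith [hK s hs (y' s)]
    _ = (∫ s in (0 : ℝ)..h, L (y s) (y' s)) + K * h := by
        rw [intervalIntegral.integral_add hcost intervalIntegrable_const,
          intervalIntegral.integral_const, sub_zero, smul_eq_mul, mul_comm]

end IsAdmissibleArc

variable {t : ℝ} {x : EuclideanSpace ℝ (Fin n)}

theorem exists_isAdmissibleArc_cost_lt (φ : ℝⁿ → ℝ≥0∞) (hV : bolzaValue L φ t x ≠ ⊤) {ε : ℝ}
    (hε : 0 < ε) :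
    ∃ y y', IsAdmissibleArc L t x y y' ∧ φ (y t) ≠ ⊤ ∧
      (∫ s in (0 : ℝ)..t, L (y s) (y' s)) + (φ (y t)).toReal <
        (bolzaValue L φ t x).toReal + ε := by
  have hfin : bolzaValue L φ t x + ENNReal.ofReal ε ≠ ⊤ := by simp [hV]
  have hlt := ENNReal.lt_add_right hV (ENNReal.ofReal_pos.2 hε).ne'
  conv_lhs at hlt => rw [bolzaValue]
  simp only [iInf_lt_iff] at hlt
  obtain ⟨y, y', h1, h2, h3, hcost⟩ := hlt
  have hφ : φ (y t) ≠ ⊤ := (ENNReal.add_ne_top.1 (ne_top_of_lt (hcost.trans_le le_top))).2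
  refine ⟨y, y', ⟨h1, h2, h3⟩, hφ, ?_⟩
  have hreal := ENNReal.toReal_strict_mono hfin hcost
  rw [ENNReal.toReal_add ENNReal.ofReal_ne_top hφ, ENNReal.toReal_add hV ENNReal.ofReal_ne_top,
    ENNReal.toReal_ofReal', ENNReal.toReal_ofReal hε.le] at hreal
  linarith [le_max_left (∫ s in (0 : ℝ)..t, L (y s) (y' s)) 0]

theorem eventually_norm_sub_lt_of_integral_le (hL0 : ∀ x u, 0 ≤ L x u) (hΘ : Superlinear Θ)
    (hcoerc : ∀ x u, Θ u ≤ L x u) (t : ℝ) (x : ℝⁿ) {C r : ℝ} (hC : 0 ≤ C) (hr : 0 < r) :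
    ∀ᶠ h in 𝓝[>] (0 : ℝ), ∀ y y', IsAdmissibleArc L t x y y' →
      (∫ s in (0 : ℝ)..t, L (y s) (y' s)) ≤ C → ∀ s ∈ Icc 0 h, s ≤ t → ‖y s - x‖ < r := by
  obtain ⟨R, hR0, hR⟩ := hΘ.exists_norm_le_add_mul (ε := r / (2 * (C + 1))) (by positivity)
  filter_upwards [Ioo_mem_nhdsGT (show 0 < r / (2 * (R + 1)) by positivity)]
    with h hh y y' hy hJ s hs hst
  have hnorm := hy.norm_sub_le ⟨hs.1, hst⟩ fun Y u => hR u (L Y u) (hL0 Y u) (hcoerc Y u)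
  have hG : ∫ τ in (0 : ℝ)..s, L (y τ) (y' τ) ≤ C :=
    (intervalIntegral.integral_mono_interval le_rfl hs.1 hst
      (ae_of_all _ fun τ => hL0 _ _) hy.3).trans hJ
  have hsR : s * R < r / 2 := by
    have := (lt_div_iff₀ (by positivity)).1 hh.2
    nlinarith [mul_le_mul_of_nonneg_right hs.2 hR0, hh.1]
  have hεC : r / (2 * (C + 1)) * C < r / 2 := by
    rw [div_mul_eq_mul_div, div_lt_div_iff₀ (by positivity) two_pos]
    nlinarith
  nlinarith [mul_le_mul_of_nonneg_left hG (show 0 ≤ r / (2 * (C + 1)) by positivity)]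

theorem IsAdmissibleArc.neg_mul_le_of_cost_le {y y' : ℝ → ℝⁿ} (hL0 : ∀ x u, 0 ≤ L x u)
    (hy : IsAdmissibleArc L t x y y') {φ : ℝⁿ → ℝ≥0∞} {h : ℝ} (hh : 0 < h) (hht : h ≤ t)
    (hφ : φ (y t) ≠ ⊤)
    (hcost : (∫ s in (0 : ℝ)..t, L (y s) (y' s)) + (φ (y t)).toReal ≤
      (bolzaValue L φ t x).toReal + h ^ 2)
    {pt σ R₁ K : ℝ} {px q : ℝⁿ}
    (hsub : bolzaValue L φ (t - h) (y h) ≠ ⊤ →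
      (bolzaValue L φ t x).toReal + (pt * (t - h - t) + ⟪px, y h - x⟫) -
        σ * ‖((t - h, y h) : ℝ × ℝⁿ) - (t, x)‖ ≤ (bolzaValue L φ (t - h) (y h)).toReal)
    (hσ0 : 0 ≤ σ) (hσ1 : σ ≤ 1) (hq : px = -((1 - σ) • q))
    (hR₁ : ∀ Y u, ‖u‖ ≤ R₁ + L Y u) (hK : ∀ s ∈ Icc 0 h, ∀ u, ⟪q, u⟫ - L (y s) u ≤ K) :
    -(σ * (1 + R₁)) ≤ h + (pt + (1 - σ) * K) := by
  have hsplit := intervalIntegral.integral_add_adjacent_intervals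
    (hy.3.mono_set (uIcc_subset_uIcc_of_le le_rfl hh.le hht))
    (hy.3.mono_set (uIcc_subset_uIcc_of_le hh.le hht le_rfl))
  have hQ : 0 ≤ ∫ s in h..t, L (y s) (y' s) :=
    intervalIntegral.integral_nonneg hht fun s _ => hL0 _ _
  have hDP := hy.bolzaValue_sub_le φ hh.le hht
  have hfin : ENNReal.ofReal (∫ s in h..t, L (y s) (y' s)) + φ (y t) ≠ ⊤ := by simp [hφ]
  have hVz := ENNReal.toReal_mono hfin hDP
  rw [ENNReal.toReal_add ENNReal.ofReal_ne_top hφ, ENNReal.toReal_ofReal hQ] at hVz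
  have hsub := hsub (ne_top_of_le_ne_top hfin hDP)
  have hinner := mul_le_mul_of_nonneg_left (hy.inner_sub_le hh.le hht hK) (sub_nonneg.2 hσ1)
  have hpx : ⟪px, y h - x⟫ = -((1 - σ) * ⟪q, y h - x⟫) := by
    rw [hq, inner_neg_left, real_inner_smul_left]
  have hD : ‖((t - h, y h) : ℝ × ℝⁿ) - (t, x)‖ ≤
      h + (h * R₁ + 1 * ∫ s in (0 : ℝ)..h, L (y s) (y' s)) := by
    rw [Prod.mk_sub_mk, Prod.norm_def]
    refine (max_le_add_of_nonneg (norm_nonneg _) (norm_nonneg _)).trans (add_le_add ?_ ?_)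
    · rw [show t - h - t = -h by ring, norm_neg, Real.norm_of_nonneg hh.le]
    · exact hy.norm_sub_le ⟨hh.le, hht⟩ fun Y u => (one_mul (L Y u)).symm ▸ hR₁ Y u
  have hσD := mul_le_mul_of_nonneg_left hD hσ0
  refine le_of_mul_le_mul_left ?_ hh
  -- Of the cost `∫₀ʰ L` saved by dynamic programming, `(1 - σ)` pays for `⟪pₓ, y h - x⟫` and `σ`
  -- pays for the error `σ ‖(h, y h - x)‖`.
  linarith

theorem neg_mul_le_of_mem_subdifferentialP_bolzaValue (hL0 : ∀ x u, 0 ≤ L x u)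
    (hΘ : Superlinear Θ) (hcoerc : ∀ x u, Θ u ≤ L x u) {φ : ℝⁿ → ℝ≥0∞} (ht : 0 < t)
    {pt : ℝ} {px : ℝⁿ}
    (hmem : (pt, px) ∈ subdifferentialP
      (fun z : ℝ × ℝⁿ => ((bolzaValue L φ z.1 z.2 : ℝ≥0∞) : EReal)) (t, x))
    {σ R₁ K : ℝ} {q : ℝⁿ} (hσ0 : 0 < σ) (hσ1 : σ ≤ 1) (hq : px = -((1 - σ) • q))
    (hR₁ : ∀ Y u, ‖u‖ ≤ R₁ + L Y u) (hK : ∀ᶠ y in 𝓝 x, ∀ u, ⟪q, u⟫ - L y u ≤ K) :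
    -(σ * (1 + R₁)) ≤ pt + (1 - σ) * K := by
  have hV : bolzaValue L φ t x ≠ ⊤ := by simpa using ne_top_of_mem_subdifferentialP hmem
  obtain ⟨ρ, hρ, hsub⟩ :=
    Metric.eventually_nhds_iff.1 (eventually_le_of_mem_subdifferentialP hmem hσ0)
  obtain ⟨r, hr, hKr⟩ := Metric.eventually_nhds_iff.1 hK
  have hlim : Tendsto (fun h => h + (pt + (1 - σ) * K)) (𝓝[>] 0) (𝓝 (pt + (1 - σ) * K)) :=
    tendsto_nhdsWithin_of_tendsto_nhds
      ((continuous_add_const _).tendsto' 0 _ (zero_add _))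
  refine ge_of_tendsto hlim ?_
  filter_upwards [eventually_norm_sub_lt_of_integral_le hL0 hΘ hcoerc t x
      (C := (bolzaValue L φ t x).toReal + 1) (by positivity) (lt_min hr hρ),
    Ioo_mem_nhdsGT (lt_min (lt_min ht one_pos) hρ)] with h hloc hh
  rw [mem_Ioo, lt_min_iff, lt_min_iff] at hh
  obtain ⟨y, y', hy, hφ, hcost⟩ := exists_isAdmissibleArc_cost_lt φ hV (pow_pos hh.1 2)
  have hht : h ≤ t := hh.2.1.1.le
  have hJ : (∫ s in (0 : ℝ)..t, L (y s) (y' s)) ≤ (bolzaValue L φ t x).toReal + 1 := by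
    linarith [ENNReal.toReal_nonneg (a := φ (y t)), pow_le_one₀ hh.1.le hh.2.1.2.le (n := 2)]
  have hclose s (hs : s ∈ Icc 0 h) := lt_min_iff.1 (hloc y y' hy hJ s hs (hs.2.trans hht))
  refine hy.neg_mul_le_of_cost_le hL0 hh.1 hht hφ hcost.le (hsub (y := (t - h, y h)) ?_) hσ0.le
    hσ1 hq hR₁ fun s hs => hKr (y := y s) ?_
  · rw [Prod.dist_eq, Real.dist_eq, dist_eq_norm, sub_sub_cancel_left, abs_neg,
      abs_of_pos hh.1]
    exact max_lt hh.2.2 (hclose h ⟨hh.1.le, le_rfl⟩).2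
  · exact (dist_eq_norm (y s) x).symm ▸ (hclose s hs).1

theorem neg_mul_le_add_hamiltonian_of_mem_subdifferentialP_bolzaValue
    (hL0 : ∀ x u, 0 ≤ L x u) (hLcont : Continuous fun p : ℝⁿ × ℝⁿ => L p.1 p.2)
    (hΘ : Superlinear Θ) (hcoerc : ∀ x u, Θ u ≤ L x u) {φ : ℝⁿ → ℝ≥0∞} (ht : 0 < t)
    {pt : ℝ} {px : ℝⁿ}
    (hmem : (pt, px) ∈ subdifferentialP
      (fun z : ℝ × ℝⁿ => ((bolzaValue L φ z.1 z.2 : ℝ≥0∞) : EReal)) (t, x))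
    {σ R₁ : ℝ} {q : ℝⁿ} (hσ0 : 0 < σ) (hσ1 : σ ≤ 1) (hq : px = -((1 - σ) • q))
    (hR₁ : ∀ Y u, ‖u‖ ≤ R₁ + L Y u) :
    -(σ * (1 + R₁)) ≤ pt + (1 - σ) * hamiltonian L x q := by
  refine le_of_forall_pos_le_add fun δ hδ => ?_
  have hHx : Continuous fun y => hamiltonian L y q :=
    (continuous_hamiltonian hLcont hΘ hcoerc).comp (continuous_id.prodMk continuous_const)
  have hK : ∀ᶠ y in 𝓝 x, ∀ u, ⟪q, u⟫ - L y u ≤ hamiltonian L x q + δ :=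
    (hHx.continuousAt.eventually (gt_mem_nhds (lt_add_of_pos_right _ hδ))).mono
      fun y hy u => (inner_sub_le_hamiltonian hLcont hΘ hcoerc y q u).trans hy.le
  have := neg_mul_le_of_mem_subdifferentialP_bolzaValue hL0 hΘ hcoerc ht hmem hσ0 hσ1 hq hR₁ hK
  nlinarith

end

theorem stmt_18_general {n : ℕ}
    (L : EuclideanSpace ℝ (Fin n) → EuclideanSpace ℝ (Fin n) → ℝ)
    (hL0 : ∀ x u, 0 ≤ L x u)
    (hLcont : Continuous
      (fun p : EuclideanSpace ℝ (Fin n) × EuclideanSpace ℝ (Fin n) => L p.1 p.2))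
    (Θ : EuclideanSpace ℝ (Fin n) → ℝ) (hΘsuper : Superlinear Θ)
    (hcoerc : ∀ x u, Θ u ≤ L x u)
    (φ : EuclideanSpace ℝ (Fin n) → ℝ≥0∞) :
    ∀ (t : ℝ) (x : EuclideanSpace ℝ (Fin n)), 0 < t →
      ∀ pt : ℝ, ∀ px : EuclideanSpace ℝ (Fin n),
        (pt, px) ∈ subdifferentialP
          (fun q : ℝ × EuclideanSpace ℝ (Fin n) =>
            ((bolzaValue L φ q.1 q.2 : ℝ≥0∞) : EReal)) (t, x) →
        0 ≤ pt + hamiltonian L x (-px) := by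
  intro t x ht pt px hmem
  obtain ⟨R₁, -, hR₁⟩ := hΘsuper.exists_norm_le_add_mul one_pos
  have hH := continuous_hamiltonian hLcont hΘsuper hcoerc
  have hlim : Tendsto (fun σ : ℝ => σ * (1 + R₁) +
      (pt + (1 - σ) * hamiltonian L x ((1 - σ)⁻¹ • -px))) (𝓝[>] 0)
      (𝓝 (pt + hamiltonian L x (-px))) := by
    refine tendsto_nhdsWithin_of_tendsto_nhds ?_
    have : ContinuousAt (fun σ : ℝ => σ * (1 + R₁) +
        (pt + (1 - σ) * hamiltonian L x ((1 - σ)⁻¹ • -px))) 0 := by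
      fun_prop (disch := norm_num)
    simpa using this.tendsto
  refine ge_of_tendsto hlim ?_
  filter_upwards [Ioo_mem_nhdsGT one_pos] with σ hσ
  have hq : px = -((1 - σ) • (1 - σ)⁻¹ • -px) := by
    rw [smul_inv_smul₀ (sub_ne_zero.2 hσ.2.ne'), neg_neg]
  have := neg_mul_le_add_hamiltonian_of_mem_subdifferentialP_bolzaValue hL0 hLcont hΘsuper
    hcoerc ht hmem hσ.1 hσ.2.le hq fun Y u => by simpa using hR₁ u (L Y u) (hL0 Y u) (hcoerc Y u)
  linarith

theorem stmt_18 {n : ℕ}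
    (L : EuclideanSpace ℝ (Fin n) → EuclideanSpace ℝ (Fin n) → ℝ)
    (hL0 : ∀ x u, 0 ≤ L x u)
    (hLcont : Continuous
      (fun p : EuclideanSpace ℝ (Fin n) × EuclideanSpace ℝ (Fin n) => L p.1 p.2))
    (hLconv : ∀ x, ConvexOn ℝ Set.univ (L x))
    (Θ : EuclideanSpace ℝ (Fin n) → ℝ) (hΘ0 : ∀ u, 0 ≤ Θ u)
    (hΘconv : ConvexOn ℝ Set.univ Θ) (hΘsuper : Superlinear Θ)
    (hcoerc : ∀ x u, Θ u ≤ L x u)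
    (φ : EuclideanSpace ℝ (Fin n) → ℝ≥0∞)
    (hφlsc : LowerSemicontinuous φ) (hφ : ∃ x, φ x ≠ ⊤) :
    ∀ (t : ℝ) (x : EuclideanSpace ℝ (Fin n)), 0 < t →
      ∀ pt : ℝ, ∀ px : EuclideanSpace ℝ (Fin n),
        (pt, px) ∈ subdifferentialP
          (fun q : ℝ × EuclideanSpace ℝ (Fin n) =>
            ((bolzaValue L φ q.1 q.2 : ℝ≥0∞) : EReal)) (t, x) →
        0 ≤ pt + hamiltonian L x (-px) :=
  stmt_18_general L hL0 hLcont Θ hΘsuper hcoerc φ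
end
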